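/- arXiv:2512.16627 — 6 statements merged into one kernel-verified Lean document; each statement's English description precedes it below -/
import Mathlib

section
/- Let A_1, A_2, A_3, A_4 be points in the plane, with the measurements a = x_{14}, b = x_{12}, c = x_{23}, d = x_{34}, e = x_{13}, f = x_{24}, p = S_{123}, q = S_{134}, r = S_{124}, s = S_{234}. Then the 10-tuple (a,b,c,d,e,f,p,q,r,s) is a Heronian diamond, i.e. it satisfies all seven equations: p^2 = H(b,c,e), q^2 = H(a,d,e), r^2 = H(a,f,b), s^2 = H(c,f,d), r + s = p + q, 4ef = (p+q)^2 + (a-b+c-d)^2, and e(r-s) = p(a-d) + q(b-c). -/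
/-- Squared distance between two points of the plane. -/
def xsq (P Q : ℝ × ℝ) : ℝ := (Q.1 - P.1) ^ 2 + (Q.2 - P.2) ^ 2

/-- Four times the signed area of the triangle `P Q R` in the plane. -/
def S (P Q R : ℝ × ℝ) : ℝ :=
  2 * ((Q.1 - P.1) * (R.2 - P.2) - (Q.2 - P.2) * (R.1 - P.1))

/-- The Heron polynomial. -/
def H (x y z : ℝ) : ℝ := -x ^ 2 - y ^ 2 - z ^ 2 + 2 * x * y + 2 * x * z + 2 * y * z

/-- A Heronian diamond: a 10-tuple satisfying the seven diamond equations. -/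
def IsHeronianDiamond (a b c d e f p q r s : ℝ) : Prop :=
  p ^ 2 = H b c e ∧ q ^ 2 = H a d e ∧ r ^ 2 = H a f b ∧ s ^ 2 = H c f d ∧
    r + s = p + q ∧ 4 * e * f = (p + q) ^ 2 + (a - b + c - d) ^ 2 ∧
    e * (r - s) = p * (a - d) + q * (b - c)

theorem quadrilateral_heronianDiamond (A1 A2 A3 A4 : ℝ × ℝ) :
    IsHeronianDiamond (xsq A1 A4) (xsq A1 A2) (xsq A2 A3) (xsq A3 A4)
      (xsq A1 A3) (xsq A2 A4) (S A1 A2 A3) (S A1 A3 A4) (S A1 A2 A4) (S A2 A3 A4) := by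
  refine ⟨?_, ?_, ?_, ?_, ?_, ?_, ?_⟩ <;> simp only [xsq, S, H, IsHeronianDiamond] <;> ring
end

section
/- Let A_1,...,A_n be points in the plane (n ≥ 4) and let j_0, j_2 with 1 ≤ j_0 < j_2 - 1 and j_2 + 1 ≤ n. Then for any i_1 with 1 ≤ i_1 ≤ n-1: S_{i_1,i_1+1,j_0} S_{j_0+1,j_2,j_2+1} - S_{i_1,i_1+1,j_0+1} S_{j_0,j_2,j_2+1} + S_{i_1,i_1+1,j_2} S_{j_0,j_0+1,j_2+1} - S_{i_1,i_1+1,j_2+1} S_{j_0,j_0+1,j_2} = 0. -/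
theorem S_relation_case_a (n : ℕ) (hn : 4 ≤ n) (A : ℕ → ℝ × ℝ)
    (i₁ j₀ j₂ : ℕ) (hj₀ : 1 ≤ j₀) (hj : j₀ + 1 < j₂) (hj₂ : j₂ + 1 ≤ n)
    (hi₁ : 1 ≤ i₁) (hi₁' : i₁ ≤ n - 1) :
    S (A i₁) (A (i₁ + 1)) (A j₀) * S (A (j₀ + 1)) (A j₂) (A (j₂ + 1))
      - S (A i₁) (A (i₁ + 1)) (A (j₀ + 1)) * S (A j₀) (A j₂) (A (j₂ + 1))
      + S (A i₁) (A (i₁ + 1)) (A j₂) * S (A j₀) (A (j₀ + 1)) (A (j₂ + 1))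
      - S (A i₁) (A (i₁ + 1)) (A (j₂ + 1)) * S (A j₀) (A (j₀ + 1)) (A j₂) = 0 := by
  simp only [S]; ring
end

section
/- Let A_1,...,A_n be points in the plane, and let i_1 satisfy 1 < i_1 < n-1. Then S_{i_1,i_1+1,1} S_{i_1+1,i_1+2,n} + S_{i_1,i_1+1,i_1+2} S_{n,1,i_1+1} - S_{i_1,i_1+1,n} S_{1,i_1+1,i_1+2} = 0. -/
theorem S_relation_case_c (n : ℕ) (A : ℕ → ℝ × ℝ)
    (i₁ : ℕ) (hi₁ : 1 < i₁) (hi₁' : i₁ < n - 1) :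
    S (A i₁) (A (i₁ + 1)) (A 1) * S (A (i₁ + 1)) (A (i₁ + 2)) (A n)
      + S (A i₁) (A (i₁ + 1)) (A (i₁ + 2)) * S (A n) (A 1) (A (i₁ + 1))
      - S (A i₁) (A (i₁ + 1)) (A n) * S (A 1) (A (i₁ + 1)) (A (i₁ + 2)) = 0 := by
  simp only [S]; ring
end

section
/- Let A_1,...,A_n be points in the plane, and let i_1, j_0 satisfy 1 ≤ i_1 < n-1 and j_0 < i_1. Then S_{i_1,i_1+1,j_0} S_{j_0+1,i_1+1,i_1+2} - S_{i_1,i_1+1,j_0+1} S_{j_0,i_1+1,i_1+2} - S_{i_1,i_1+1,i_1+2} S_{j_0,j_0+1,i_1+1} = 0. -/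
theorem S_relation_case_d (n : ℕ) (A : ℕ → ℝ × ℝ)
    (i₁ j₀ : ℕ) (hi₁ : 1 ≤ i₁) (hi₁' : i₁ < n - 1) (hj₀ : j₀ < i₁) :
    S (A i₁) (A (i₁ + 1)) (A j₀) * S (A (j₀ + 1)) (A (i₁ + 1)) (A (i₁ + 2))
      - S (A i₁) (A (i₁ + 1)) (A (j₀ + 1)) * S (A j₀) (A (i₁ + 1)) (A (i₁ + 2))
      - S (A i₁) (A (i₁ + 1)) (A (i₁ + 2)) * S (A j₀) (A (j₀ + 1)) (A (i₁ + 1)) = 0 := by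
  simp only [S]; ring
end

section
/- Let A_1,...,A_n be points in the plane, and let j_0 satisfy 1 ≤ j_0 < n-2. Then S_{n,1,j_0} S_{j_0+1,n-1,n} - S_{n,1,j_0+1} S_{j_0,n-1,n} + S_{n,1,n-1} S_{j_0,j_0+1,n} = 0. -/
theorem S_relation_case_e (n : ℕ) (A : ℕ → ℝ × ℝ)
    (j₀ : ℕ) (hj₀ : 1 ≤ j₀) (hj₀' : j₀ < n - 2) :
    S (A n) (A 1) (A j₀) * S (A (j₀ + 1)) (A (n - 1)) (A n)
      - S (A n) (A 1) (A (j₀ + 1)) * S (A j₀) (A (n - 1)) (A n)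
      + S (A n) (A 1) (A (n - 1)) * S (A j₀) (A (j₀ + 1)) (A n) = 0 := by
  simp only [S]; ring
end

section
/- Let C be a 3×n matrix of rank at most 3 over a field and let m_{ijk} denote its maximal minor on columns i, j, k. Then the determinant of any 4×4 matrix M with entries M_{rc} = m_{a+r-1, a+r, b+c-1} (indices modulo n, r, c ∈ {1,2,3,4}) vanishes. -/
/-- The maximal minor of a `3 × n` matrix on columns `i`, `j`, `k`
(columns indexed modulo `n`). -/
def minor3 {F : Type*} [Field F] {n : ℕ} (C : Matrix (Fin 3) (ZMod n) F)
    (i j k : ZMod n) : F :=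
  (Matrix.of fun r (x : Fin 3) => C r (![i, j, k] x)).det

/-!
With `C_i` the `i`-th column of `C`, expanding along the last column gives
`m_{ijk} = (C_i × C_j) ⬝ C_k`, so the diamond matrix
`(m_{a+r-1, a+r, b+c-1})_{r,c}` factors as a `4 × 3` matrix (rows `C_{a+r-1} × C_{a+r}`) times a
`3 × 4` matrix (columns `C_{b+c-1}`). A product through a space of dimension `3 < 4` is singular.
-/

open Matrix

theorem Matrix.det_mul_eq_zero_of_card_lt {m k R : Type*} [Fintype m] [DecidableEq m]
    [Fintype k] [Field R] (A : Matrix m k R) (B : Matrix k m R)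
    (h : Fintype.card k < Fintype.card m) : (A * B).det = 0 := by
  by_contra hdet
  have hfull := (A * B).rank_of_isUnit ((A * B).isUnit_iff_isUnit_det.mpr (Ne.isUnit hdet))
  have hthin := (A.rank_mul_le_left B).trans A.rank_le_card_width
  omega

theorem minor3_eq_cross_dotProduct {F : Type*} [Field F] {n : ℕ}
    (C : Matrix (Fin 3) (ZMod n) F) (i j k : ZMod n) :
    minor3 C i j k = (Cᵀ i ⨯₃ Cᵀ j) ⬝ᵥ Cᵀ k := by
  have hcols : (of fun r (x : Fin 3) => C r (![i, j, k] x))ᵀ =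
      of ![Cᵀ i, Cᵀ j, Cᵀ k] := by
    ext x r
    fin_cases x <;> rfl
  rw [minor3, ← det_transpose, hcols, dotProduct_comm, triple_product_permutation,
    triple_product_eq_det]
  rfl

theorem minor_frieze_diamond_det_general {F : Type*} [Field F] {n : ℕ}
    (C : Matrix (Fin 3) (ZMod n) F) (a b : ZMod n) :
    Matrix.det (Matrix.of fun r c : Fin 4 =>
      minor3 C (a + (r : ℕ)) (a + (r : ℕ) + 1) (b + (c : ℕ))) = 0 := by
  have hfactor : (Matrix.of fun r c : Fin 4 =>
      minor3 C (a + (r : ℕ)) (a + (r : ℕ) + 1) (b + (c : ℕ))) =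
      of (fun (r : Fin 4) => Cᵀ (a + (r : ℕ)) ⨯₃ Cᵀ (a + (r : ℕ) + 1)) *
        of (fun p (c : Fin 4) => C p (b + (c : ℕ))) := by
    ext r c
    rw [of_apply, minor3_eq_cross_dotProduct, mul_apply']
    rfl
  rw [hfactor]
  exact det_mul_eq_zero_of_card_lt _ _ (by simp)

theorem minor_frieze_diamond_det {F : Type*} [Field F] {n : ℕ} [NeZero n]
    (C : Matrix (Fin 3) (ZMod n) F) (hrank : C.rank ≤ 3) (a b : ZMod n) :
    Matrix.det (Matrix.of fun r c : Fin 4 =>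
      minor3 C (a + (r : ℕ)) (a + (r : ℕ) + 1) (b + (c : ℕ))) = 0 :=
  minor_frieze_diamond_det_general C a b
end
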